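/- Let H be a real inner product space, N ≥ 1, α : Fin N → ℝ with m := Σ_{i=1}^N α_i² > 0, and let δ > 0, λ > 0, μ > 0. Set C* := m/(λδ + m), so 0 < C* < 1. Let a : ℕ → ℝ and E : ℕ → ℝ be sequences of nonnegative reals and p : ℕ → (Fin N → H), and for each k write x_k := ‖Σ_{i=1}^N α_i • p_k i‖. Assume for every k ≥ 1: (H1) δ · Σ_{i=1}^N ‖p_k i‖² + x_k²/λ ≤ (a_{k−1}/λ) · x_k, and (H2) 2μ · E_k² + a_k²/λ ≤ (x_k/λ) · a_k. Then for every k ≥ 1 one has a_k ≤ x_k ≤ C* · a_{k−1}, hence a_k ≤ (C*)^k · a_0; consequently a_k → 0, x_k → 0, E_k → 0, and Σ_{i=1}^N ‖p_k i‖² → 0 as k → ∞. -/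

import Mathlib

/-!
Clearing `λ`, (H2) reads `2μλ E_k² + a_k² ≤ x_k a_k`, so `a_k ≤ x_k`; (H1) reads
`δλ S_k + x_k² ≤ a_{k-1} x_k` with `S_k = Σ ‖p_k i‖²`, and Cauchy–Schwarz `x_k² ≤ m S_k`
turns it into `(λδ + m) x_k ≤ m a_{k-1}`, i.e. `x_k ≤ C* a_{k-1}`. Hence `a` decays
geometrically, `x` with it, and the same two inequalities bound `E_k²` and `S_k` by
products of vanishing terms.
-/

open Finset Filter Topology

theorem norm_sum_smul_sq_le {ι E : Type*} [SeminormedAddCommGroup E] [NormedSpace ℝ E]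
    (s : Finset ι) (α : ι → ℝ) (v : ι → E) :
    ‖∑ i ∈ s, α i • v i‖ ^ 2 ≤ (∑ i ∈ s, α i ^ 2) * ∑ i ∈ s, ‖v i‖ ^ 2 := by
  have hnorm : ‖∑ i ∈ s, α i • v i‖ ≤ ∑ i ∈ s, |α i| * ‖v i‖ :=
    (norm_sum_le _ _).trans_eq (by simp only [norm_smul, Real.norm_eq_abs])
  calc ‖∑ i ∈ s, α i • v i‖ ^ 2 ≤ (∑ i ∈ s, |α i| * ‖v i‖) ^ 2 := by gcongr
    _ ≤ (∑ i ∈ s, |α i| ^ 2) * ∑ i ∈ s, ‖v i‖ ^ 2 := sum_mul_sq_le_sq_mul_sq _ _ _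
    _ = (∑ i ∈ s, α i ^ 2) * ∑ i ∈ s, ‖v i‖ ^ 2 := by simp only [sq_abs]

theorem mul_add_sq_le_of_add_sq_div_le {lam P s t : ℝ} (hlam : 0 < lam)
    (h : P + t ^ 2 / lam ≤ s / lam * t) : lam * P + t ^ 2 ≤ s * t := by
  have h' : (P + t ^ 2 / lam) * lam ≤ s / lam * t * lam := by gcongr
  field_simp at h'
  linarith

theorem mul_le_of_mul_sq_le_mul {c s t : ℝ} (hc : 0 < c) (hs : 0 ≤ s)
    (h : c * t ^ 2 ≤ s * t) : c * t ≤ s := by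
  rcases le_or_gt t 0 with ht | ht
  · nlinarith
  · nlinarith

theorem norm_sum_smul_le_contraction_mul {ι H : Type*} [SeminormedAddCommGroup H]
    [NormedSpace ℝ H] (s : Finset ι) (α : ι → ℝ) (v : ι → H) {δ lam a : ℝ}
    (hm : 0 < ∑ i ∈ s, α i ^ 2) (hδ : 0 < δ) (hlam : 0 < lam) (ha : 0 ≤ a)
    (h : lam * (δ * ∑ i ∈ s, ‖v i‖ ^ 2) + ‖∑ i ∈ s, α i • v i‖ ^ 2
      ≤ a * ‖∑ i ∈ s, α i • v i‖) :
    ‖∑ i ∈ s, α i • v i‖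
      ≤ (∑ i ∈ s, α i ^ 2) / (lam * δ + ∑ i ∈ s, α i ^ 2) * a := by
  set m := ∑ i ∈ s, α i ^ 2
  set x := ‖∑ i ∈ s, α i • v i‖
  have hcs : x ^ 2 ≤ m * ∑ i ∈ s, ‖v i‖ ^ 2 := norm_sum_smul_sq_le s α v
  have hquad : (lam * δ + m) * x ^ 2 ≤ (m * a) * x := by
    nlinarith [mul_le_mul_of_nonneg_left hcs (by positivity : 0 ≤ lam * δ)]
  rw [div_mul_eq_mul_div, le_div_iff₀' (by positivity)]
  exact mul_le_of_mul_sq_le_mul (by positivity) (by positivity) hquad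

theorem tendsto_zero_of_mul_le_mul {α : Type*} {l : Filter α} {P s t : α → ℝ} {c : ℝ}
    (hc : 0 < c) (hP : ∀ᶠ k in l, 0 ≤ P k) (h : ∀ᶠ k in l, c * P k ≤ s k * t k)
    (hs : Tendsto s l (𝓝 0)) (ht : Tendsto t l (𝓝 0)) : Tendsto P l (𝓝 0) := by
  refine squeeze_zero' hP (h.mono fun k hk => (le_div_iff₀' hc).2 hk) ?_
  simpa using (hs.mul ht).div_const c

theorem tendsto_zero_of_sq_tendsto_zero {α : Type*} {l : Filter α} {f : α → ℝ}
    (h : Tendsto (fun k => f k ^ 2) l (𝓝 0)) : Tendsto f l (𝓝 0) := by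
  refine squeeze_zero_norm (fun k => ?_) (by simpa using h.sqrt)
  rw [Real.norm_eq_abs, Real.sqrt_sq_eq_abs]

theorem iteratively_decoupled_algorithm_convergence_general
    {H : Type*} [NormedAddCommGroup H] [InnerProductSpace ℝ H]
    (N : ℕ) (α : Fin N → ℝ)
    (m : ℝ) (hm : m = ∑ i : Fin N, (α i) ^ 2) (hm_pos : 0 < m)
    (δ lam μ : ℝ) (hδ : 0 < δ) (hlam : 0 < lam) (hμ : 0 < μ)
    (Cstar : ℝ) (hC : Cstar = m / (lam * δ + m))
    (a E : ℕ → ℝ) (ha : ∀ k, 0 ≤ a k)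
    (p : ℕ → Fin N → H)
    (x : ℕ → ℝ) (hx : ∀ k, x k = ‖∑ i : Fin N, α i • p k i‖)
    (H1 : ∀ k, 1 ≤ k →
      δ * (∑ i : Fin N, ‖p k i‖ ^ 2) + (x k) ^ 2 / lam ≤ (a (k - 1) / lam) * x k)
    (H2 : ∀ k, 1 ≤ k →
      2 * μ * (E k) ^ 2 + (a k) ^ 2 / lam ≤ (x k / lam) * a k) :
    (0 < Cstar ∧ Cstar < 1) ∧
    (∀ k, 1 ≤ k → a k ≤ x k ∧ x k ≤ Cstar * a (k - 1)) ∧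
    (∀ k, 1 ≤ k → a k ≤ Cstar ^ k * a 0) ∧
    Tendsto a atTop (𝓝 0) ∧
    Tendsto x atTop (𝓝 0) ∧
    Tendsto E atTop (𝓝 0) ∧
    Tendsto (fun k => ∑ i : Fin N, ‖p k i‖ ^ 2) atTop (𝓝 0) := by
  have hx_nonneg : ∀ k, 0 ≤ x k := fun k => (hx k).symm ▸ norm_nonneg _
  have hC_pos : 0 < Cstar := hC ▸ by positivity
  have hC_lt : Cstar < 1 :=
    hC ▸ (div_lt_one (by positivity)).2 (lt_add_of_pos_left m (by positivity))
  have hH1 k (hk : 1 ≤ k) := mul_add_sq_le_of_add_sq_div_le hlam (H1 k hk)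
  have hH2 k (hk : 1 ≤ k) := mul_add_sq_le_of_add_sq_div_le hlam (H2 k hk)
  have step : ∀ k, 1 ≤ k → a k ≤ x k ∧ x k ≤ Cstar * a (k - 1) := by
    intro k hk
    constructor
    · have hE_nonneg : 0 ≤ lam * (2 * μ * E k ^ 2) := by positivity
      simpa using mul_le_of_mul_sq_le_mul one_pos (hx_nonneg k) (by linarith [hH2 k hk])
    · have h := hH1 k hk
      rw [hx k] at h ⊢
      subst hC hm
      exact norm_sum_smul_le_contraction_mul _ α (p k) hm_pos hδ hlam (ha _) h
  have contraction : ∀ k, a (k + 1) ≤ Cstar * a k := fun k => by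
    simpa using (step (k + 1) k.succ_pos).1.trans (step (k + 1) k.succ_pos).2
  have geom : ∀ k, a k ≤ Cstar ^ k * a 0 := fun k =>
    le_geom hC_pos.le k fun j _ => contraction j
  have ha_lim : Tendsto a atTop (𝓝 0) := squeeze_zero ha geom <| by
    simpa using (tendsto_pow_atTop_nhds_zero_of_lt_one hC_pos.le hC_lt).mul_const (a 0)
  have ha_prev_lim : Tendsto (fun k => a (k - 1)) atTop (𝓝 0) :=
    ha_lim.comp (tendsto_sub_atTop_nat 1)
  have hx_lim : Tendsto x atTop (𝓝 0) :=
    squeeze_zero' (.of_forall hx_nonneg) ((eventually_ge_atTop 1).mono fun k hk => (step k hk).2)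
      (by simpa using ha_prev_lim.const_mul Cstar)
  refine ⟨⟨hC_pos, hC_lt⟩, step, fun k _ => geom k, ha_lim, hx_lim, ?_, ?_⟩
  · refine tendsto_zero_of_sq_tendsto_zero <| tendsto_zero_of_mul_le_mul (c := lam * (2 * μ))
      (by positivity) (.of_forall fun k => sq_nonneg (E k))
      ((eventually_ge_atTop 1).mono fun k hk => ?_) hx_lim ha_lim
    linarith [hH2 k hk, sq_nonneg (a k)]
  · refine tendsto_zero_of_mul_le_mul (c := lam * δ) (by positivity)
      (.of_forall fun k => by positivity) ((eventually_ge_atTop 1).mono fun k hk => ?_)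
      ha_prev_lim hx_lim
    linarith [hH1 k hk, sq_nonneg (x k)]

/-- Abstract content of Theorem 4.1 of the paper: under the error relations
(H1) and (H2) of the iteratively decoupled algorithm, writing
`x_k = ‖Σ α_i • p_k i‖` and `C* = m/(λδ + m)` (with `0 < C* < 1`), one has
`a_k ≤ x_k ≤ C* a_{k−1}` for all `k ≥ 1`, hence `a_k ≤ (C*)^k a_0`, and
consequently `a_k, x_k, E_k, Σ ‖p_k i‖² → 0` as `k → ∞`. -/
theorem iteratively_decoupled_algorithm_convergence
    {H : Type*} [NormedAddCommGroup H] [InnerProductSpace ℝ H]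
    (N : ℕ) (hN : 1 ≤ N) (α : Fin N → ℝ)
    (m : ℝ) (hm : m = ∑ i : Fin N, (α i) ^ 2) (hm_pos : 0 < m)
    (δ lam μ : ℝ) (hδ : 0 < δ) (hlam : 0 < lam) (hμ : 0 < μ)
    (Cstar : ℝ) (hC : Cstar = m / (lam * δ + m))
    (a E : ℕ → ℝ) (ha : ∀ k, 0 ≤ a k) (hE : ∀ k, 0 ≤ E k)
    (p : ℕ → Fin N → H)
    (x : ℕ → ℝ) (hx : ∀ k, x k = ‖∑ i : Fin N, α i • p k i‖)
    (H1 : ∀ k, 1 ≤ k →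
      δ * (∑ i : Fin N, ‖p k i‖ ^ 2) + (x k) ^ 2 / lam ≤ (a (k - 1) / lam) * x k)
    (H2 : ∀ k, 1 ≤ k →
      2 * μ * (E k) ^ 2 + (a k) ^ 2 / lam ≤ (x k / lam) * a k) :
    (0 < Cstar ∧ Cstar < 1) ∧
    (∀ k, 1 ≤ k → a k ≤ x k ∧ x k ≤ Cstar * a (k - 1)) ∧
    (∀ k, 1 ≤ k → a k ≤ Cstar ^ k * a 0) ∧
    Tendsto a atTop (𝓝 0) ∧
    Tendsto x atTop (𝓝 0) ∧
    Tendsto E atTop (𝓝 0) ∧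
    Tendsto (fun k => ∑ i : Fin N, ‖p k i‖ ^ 2) atTop (𝓝 0) :=
  iteratively_decoupled_algorithm_convergence_general N α m hm hm_pos δ lam μ hδ hlam hμ Cstar hC a
    E ha p x hx H1 H2
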